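/- arXiv:2604.04971 — 2 statements merged into one kernel-verified Lean document; each statement's English description precedes it below -/
import Mathlib

section
/- For K_ε(v) = M_{(ε/2, u_ε, 1)}(v) + M_{(ε/2, -u_ε, 1)}(v) with u_ε = (1/√ε, 0, 0), the squared L² norm over ℝ³ equals ‖K_ε‖²_{L²} = ε²/(16 π^{3/2}) · (1 + e^{-1/ε}). In particular ‖K_ε‖_{L²} = O(ε) as ε → 0⁺. -/
open MeasureTheory Real

noncomputable def maxwellian (ρ : ℝ) (u : EuclideanSpace ℝ (Fin 3)) (T : ℝ)
    (v : EuclideanSpace ℝ (Fin 3)) : ℝ :=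
  ρ * (2 * π * T) ^ (-(3 : ℝ) / 2) * Real.exp (-‖v - u‖ ^ 2 / (2 * T))

noncomputable def uvec (ε : ℝ) : EuclideanSpace ℝ (Fin 3) :=
  EuclideanSpace.single 0 (ε ^ (-(1 : ℝ) / 2))

noncomputable def Keps (ε : ℝ) (v : EuclideanSpace ℝ (Fin 3)) : ℝ :=
  maxwellian (ε / 2) (uvec ε) 1 v + maxwellian (ε / 2) (-uvec ε) 1 v

noncomputable abbrev E3 := EuclideanSpace ℝ (Fin 3)

lemma gauss_integrable : Integrable (fun v : E3 => rexp (-‖v‖ ^ 2)) := by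
  have h := (GaussianFourier.integrable_cexp_neg_mul_sq_norm_add (b := 1)
    (by norm_num) 0 (0 : E3)).norm
  convert h using 2 with v
  simp [Complex.norm_exp]
  norm_cast

lemma gauss_integrable' (w : E3) : Integrable (fun v : E3 => rexp (-‖v - w‖ ^ 2)) :=
  gauss_integrable.comp_sub_right w

lemma gauss_integral (w : E3) : (∫ v : E3, rexp (-‖v - w‖ ^ 2)) = π ^ ((3:ℝ)/2) := by
  rw [integral_sub_right_eq_self (fun v : E3 => rexp (-‖v‖ ^ 2)) w]
  have h := GaussianFourier.integral_rexp_neg_mul_sq_norm (V := E3) (b := 1) one_pos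
  simp only [neg_mul, one_mul, div_one] at h
  rw [h]
  norm_num

lemma keps_sq (ε : ℝ) (v : E3) : (Keps ε v) ^ 2 =
    (ε / 2 * (2 * π) ^ (-(3:ℝ)/2)) ^ 2 *
      (rexp (-‖v - uvec ε‖ ^ 2) + rexp (-‖v - (-uvec ε)‖ ^ 2)
        + 2 * (rexp (-‖uvec ε‖ ^ 2) * rexp (-‖v‖ ^ 2))) := by
  have cross : rexp (-‖v - uvec ε‖ ^ 2 / 2) * rexp (-‖v + uvec ε‖ ^ 2 / 2)
      = rexp (-‖uvec ε‖ ^ 2) * rexp (-‖v‖ ^ 2) := by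
    rw [← Real.exp_add, ← Real.exp_add]
    congr 1
    have h := parallelogram_law_with_norm ℝ v (uvec ε)
    linarith
  have sq1 : ∀ w : E3, rexp (-‖w‖ ^ 2 / 2) * rexp (-‖w‖ ^ 2 / 2) = rexp (-‖w‖ ^ 2) := by
    intro w; rw [← Real.exp_add]; ring_nf
  unfold Keps maxwellian
  rw [mul_one, mul_one, sub_neg_eq_add] at *
  have h1 := sq1 (v - uvec ε)
  have h2 := sq1 (v + uvec ε)
  linear_combination ((ε / 2 * (2 * π) ^ (-(3:ℝ)/2)) ^ 2) * h1
    + ((ε / 2 * (2 * π) ^ (-(3:ℝ)/2)) ^ 2) * h2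
    + (2 * (ε / 2 * (2 * π) ^ (-(3:ℝ)/2)) ^ 2) * cross

lemma uvec_norm_sq (ε : ℝ) (hε : 0 < ε) : ‖uvec ε‖ ^ 2 = 1 / ε := by
  unfold uvec
  rw [EuclideanSpace.norm_single, Real.norm_eq_abs,
    abs_of_nonneg (Real.rpow_nonneg hε.le _), ← Real.rpow_natCast _ 2,
    ← Real.rpow_mul hε.le]
  norm_num
  exact Real.rpow_neg_one ε

lemma final_arith (ε e : ℝ) :
    (ε / 2 * (2 * π) ^ (-(3:ℝ)/2)) ^ 2 *
      (π ^ ((3:ℝ)/2) + π ^ ((3:ℝ)/2) + 2 * (e * π ^ ((3:ℝ)/2)))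
      = ε ^ 2 / (16 * π ^ ((3:ℝ)/2)) * (1 + e) := by
  have hπ : (0:ℝ) < π := pi_pos
  have h1 : ((2 * π) ^ (-(3:ℝ)/2)) ^ 2 = (2 * π) ^ (-(3:ℝ)) := by
    rw [← Real.rpow_natCast ((2*π) ^ (-(3:ℝ)/2)) 2, ← Real.rpow_mul (by positivity)]
    norm_num
  have h2 : (2 * π) ^ (-(3:ℝ)) = 1 / (8 * (π ^ ((3:ℝ)/2) * π ^ ((3:ℝ)/2))) := by
    rw [Real.rpow_neg (by positivity), Real.mul_rpow (by norm_num) hπ.le,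
      ← Real.rpow_add hπ]
    norm_num
  have hN : (0:ℝ) < π ^ ((3:ℝ)/2) := Real.rpow_pos_of_pos hπ _
  rw [mul_pow, h1, h2]
  field_simp
  ring

lemma keps_integral (ε : ℝ) (hε : 0 < ε) :
    (∫ v, (Keps ε v) ^ 2) = ε ^ 2 / (16 * π ^ ((3:ℝ)/2)) * (1 + Real.exp (-1 / ε)) := by
  simp only [keps_sq ε]
  have hA : Integrable (fun v : E3 => rexp (-‖v - uvec ε‖ ^ 2) + rexp (-‖v - -uvec ε‖ ^ 2)) :=
    (gauss_integrable' _).add (gauss_integrable' _)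
  have hB : Integrable (fun v : E3 => 2 * (rexp (-‖uvec ε‖ ^ 2) * rexp (-‖v‖ ^ 2))) :=
    (gauss_integrable.const_mul _).const_mul 2
  rw [integral_const_mul _ _,
    MeasureTheory.integral_add hA hB,
    MeasureTheory.integral_add (gauss_integrable' _) (gauss_integrable' _),
    integral_const_mul _ _, integral_const_mul _ _,
    gauss_integral, gauss_integral]
  have h0 : (∫ v : E3, rexp (-‖v‖ ^ 2)) = π ^ ((3:ℝ)/2) := by simpa using gauss_integral 0
  rw [h0, uvec_norm_sq ε hε, show -(1 / ε) = -1 / ε by ring, final_arith]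

/-- the squared L² norm of K_ε, and the O(ε) bound. -/
theorem Keps_L2_norm_sq :
    (∀ ε : ℝ, 0 < ε →
      (∫ v, (Keps ε v) ^ 2) = ε ^ 2 / (16 * π ^ ((3 : ℝ) / 2)) * (1 + Real.exp (-1 / ε))) ∧
    (fun ε : ℝ => Real.sqrt (∫ v, (Keps ε v) ^ 2)) =O[nhdsWithin 0 (Set.Ioi 0)]
      (fun ε : ℝ => ε) := by
  have hN : (0:ℝ) < π ^ ((3:ℝ)/2) := Real.rpow_pos_of_pos pi_pos _
  refine ⟨keps_integral, ?_⟩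
  rw [Asymptotics.isBigO_iff]
  refine ⟨Real.sqrt (1 / (8 * π ^ ((3:ℝ)/2))), ?_⟩
  filter_upwards [self_mem_nhdsWithin] with ε hε
  have hε : 0 < ε := hε
  rw [keps_integral ε hε]
  have h1 : ε ^ 2 / (16 * π ^ ((3:ℝ)/2)) * (1 + Real.exp (-1 / ε))
      ≤ ε ^ 2 * (1 / (8 * π ^ ((3:ℝ)/2))) := by
    have he : Real.exp (-1 / ε) ≤ 1 := Real.exp_le_one_iff.mpr (div_nonpos_of_nonpos_of_nonneg (by norm_num) hε.le)
    rw [div_mul_eq_mul_div, mul_one_div]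
    rw [div_le_div_iff₀ (by positivity) (by positivity)]
    nlinarith [mul_nonneg (sq_nonneg ε) hN.le, he]
  calc ‖Real.sqrt (ε ^ 2 / (16 * π ^ ((3:ℝ)/2)) * (1 + Real.exp (-1 / ε)))‖
      = Real.sqrt (ε ^ 2 / (16 * π ^ ((3:ℝ)/2)) * (1 + Real.exp (-1 / ε))) := by
        rw [Real.norm_eq_abs, abs_of_nonneg (Real.sqrt_nonneg _)]
    _ ≤ Real.sqrt (ε ^ 2 * (1 / (8 * π ^ ((3:ℝ)/2)))) := Real.sqrt_le_sqrt h1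
    _ = Real.sqrt (1 / (8 * π ^ ((3:ℝ)/2))) * ‖ε‖ := by
        rw [mul_comm, Real.sqrt_mul (by positivity), Real.sqrt_sq_eq_abs, Real.norm_eq_abs]
end

section
/- With K_ε as defined and φ(v) = e^{-|v|²}, the pairing satisfies ⟨K_ε, φ⟩_{L²(ℝ³)} = 3^{-3/2} ε e^{-1/(3ε)}; hence it decays faster than any polynomial in ε as ε → 0⁺. -/
open MeasureTheory Real

lemma exp_combine (u v : EuclideanSpace ℝ (Fin 3)) :
    Real.exp (-‖v - u‖ ^ 2 / (2 * 1)) * Real.exp (-‖v‖ ^ 2) =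
      Real.exp (-‖u‖ ^ 2 / 3) * Real.exp (-(3 / 2) * ‖v - (3 : ℝ)⁻¹ • u‖ ^ 2) := by
  rw [← Real.exp_add, ← Real.exp_add]
  congr 1
  have h1 : ‖v - u‖ ^ 2 = ‖v‖ ^ 2 - 2 * inner ℝ v u + ‖u‖ ^ 2 := norm_sub_sq_real v u
  have h2 : ‖v - (3 : ℝ)⁻¹ • u‖ ^ 2
      = ‖v‖ ^ 2 - 2 * ((3 : ℝ)⁻¹ * inner ℝ v u) + (3 : ℝ)⁻¹ ^ 2 * ‖u‖ ^ 2 := by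
    rw [norm_sub_sq_real, real_inner_smul_right, norm_smul]
    norm_num [mul_pow]
  rw [h1, h2]; ring

lemma integrable_rexp_gauss :
    Integrable (fun v : EuclideanSpace ℝ (Fin 3) => Real.exp (-(3 / 2) * ‖v‖ ^ 2)) := by
  have h := GaussianFourier.integrable_cexp_neg_mul_sq_norm_add (b := (3/2 : ℂ))
    (by norm_num) 0 (0 : EuclideanSpace ℝ (Fin 3))
  simp only [zero_mul, add_zero] at h
  have h2 := h.re
  convert h2 using 2 with v
  rw [show (-(3/2 : ℂ) * (‖v‖ : ℂ) ^ 2) = ((-(3/2) * ‖v‖ ^ 2 : ℝ) : ℂ) by push_cast; ring,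
    ← Complex.ofReal_exp]
  exact (Complex.ofReal_re _).symm

lemma maxwellian_pairing (ρ : ℝ) (u : EuclideanSpace ℝ (Fin 3)) :
    (∫ v, maxwellian ρ u 1 v * Real.exp (-‖v‖ ^ 2)) =
      ρ * (3 : ℝ) ^ (-(3 : ℝ) / 2) * Real.exp (-‖u‖ ^ 2 / 3) := by
  have key : ∀ v : EuclideanSpace ℝ (Fin 3),
      maxwellian ρ u 1 v * Real.exp (-‖v‖ ^ 2) =
        (ρ * (2 * π * 1) ^ (-(3 : ℝ) / 2) * Real.exp (-‖u‖ ^ 2 / 3)) *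
          Real.exp (-(3 / 2) * ‖v - (3 : ℝ)⁻¹ • u‖ ^ 2) := by
    intro v
    unfold maxwellian
    rw [mul_assoc, exp_combine u v]
    ring
  simp only [key]
  rw [integral_const_mul]
  rw [integral_sub_right_eq_self (fun v : EuclideanSpace ℝ (Fin 3) =>
    Real.exp (-(3 / 2) * ‖v‖ ^ 2)) ((3 : ℝ)⁻¹ • u)]
  rw [GaussianFourier.integral_rexp_neg_mul_sq_norm (by norm_num : (0:ℝ) < 3/2)]
  have hrank : (Module.finrank ℝ (EuclideanSpace ℝ (Fin 3)) : ℝ) = 3 := by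
    simp [finrank_euclideanSpace]
  rw [hrank]
  have hπ : (0:ℝ) < 2 * π := by positivity
  have hcalc : (2 * π * 1) ^ (-(3 : ℝ) / 2) * (π / (3 / 2)) ^ ((3:ℝ) / 2)
      = (3 : ℝ) ^ (-(3 : ℝ) / 2) := by
    have h1 : (π / (3 / 2) : ℝ) = (2 * π) / 3 := by ring
    rw [mul_one, h1, Real.div_rpow (by positivity) (by norm_num),
      div_eq_mul_inv ((2 * π) ^ ((3:ℝ) / 2)), ← mul_assoc, ← Real.rpow_add hπ,
      ← Real.rpow_neg (by norm_num : (0:ℝ) ≤ 3)]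
    norm_num
  rw [← hcalc]; ring

lemma norm_uvec_sq {ε : ℝ} (hε : 0 < ε) : ‖uvec ε‖ ^ 2 = ε⁻¹ := by
  rw [uvec, EuclideanSpace.norm_single, Real.norm_eq_abs,
    abs_of_pos (Real.rpow_pos_of_pos hε _), ← Real.rpow_natCast _ 2, ← Real.rpow_mul hε.le]
  norm_num [Real.rpow_neg_one]

/-- pairing of K_ε against e^{-|v|²} and its superpolynomial decay. -/
theorem Keps_pairing_gaussian :
    (∀ ε : ℝ, 0 < ε →
      (∫ v, Keps ε v * Real.exp (-‖v‖ ^ 2)) =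
        (3 : ℝ) ^ (-(3 : ℝ) / 2) * ε * Real.exp (-1 / (3 * ε))) ∧
    (∀ n : ℕ,
      (fun ε : ℝ => (3 : ℝ) ^ (-(3 : ℝ) / 2) * ε * Real.exp (-1 / (3 * ε)))
        =o[nhdsWithin 0 (Set.Ioi 0)] (fun ε : ℝ => ε ^ n)) := by
  constructor
  · intro ε hε
    have h1 := maxwellian_pairing (ε / 2) (uvec ε)
    have h2 := maxwellian_pairing (ε / 2) (-uvec ε)
    have heq : ∀ v, Keps ε v * Real.exp (-‖v‖ ^ 2) =
        maxwellian (ε / 2) (uvec ε) 1 v * Real.exp (-‖v‖ ^ 2) +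
        maxwellian (ε / 2) (-uvec ε) 1 v * Real.exp (-‖v‖ ^ 2) := by
      intro v; rw [Keps]; ring
    have hint : ∀ (u : EuclideanSpace ℝ (Fin 3)),
        Integrable (fun v => maxwellian (ε/2) u 1 v * Real.exp (-‖v‖ ^ 2)) := by
      intro u
      have : (fun v : EuclideanSpace ℝ (Fin 3) =>
          maxwellian (ε/2) u 1 v * Real.exp (-‖v‖ ^ 2)) =
          (fun v => (ε/2 * (2 * π * 1) ^ (-(3 : ℝ) / 2) * Real.exp (-‖u‖ ^ 2 / 3)) *
            Real.exp (-(3 / 2) * ‖v - (3 : ℝ)⁻¹ • u‖ ^ 2)) := by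
        funext v
        unfold maxwellian
        rw [mul_assoc, exp_combine u v]
        ring
      rw [this]
      apply Integrable.const_mul
      exact integrable_rexp_gauss.comp_sub_right _
    simp only [heq]
    rw [integral_add (hint _) (hint _), h1, h2, norm_neg, norm_uvec_sq hε]
    have : -ε⁻¹ / 3 = -1 / (3 * ε) := by field_simp
    rw [this]; ring
  · intro n
    rw [Asymptotics.isLittleO_iff_tendsto']
    · have h1 : Filter.Tendsto (fun t : ℝ => t ^ n * Real.exp (-(3⁻¹) * t))
          Filter.atTop (nhds 0) := by
        have := tendsto_rpow_mul_exp_neg_mul_atTop_nhds_zero (n : ℝ) 3⁻¹ (by norm_num)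
        refine this.congr' ?_
        filter_upwards [Filter.eventually_ge_atTop (0:ℝ)] with t ht
        rw [Real.rpow_natCast]
      have h2 : Filter.Tendsto (fun ε : ℝ => (ε⁻¹) ^ n * Real.exp (-(3⁻¹) * ε⁻¹))
          (nhdsWithin 0 (Set.Ioi 0)) (nhds 0) := h1.comp tendsto_inv_nhdsGT_zero
      have h3 : Filter.Tendsto (fun ε : ℝ =>
          ((3 : ℝ) ^ (-(3 : ℝ) / 2) * ε) * ((ε⁻¹) ^ n * Real.exp (-(3⁻¹) * ε⁻¹)))
          (nhdsWithin 0 (Set.Ioi 0)) (nhds 0) := by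
        have hε : Filter.Tendsto (fun ε : ℝ => (3 : ℝ) ^ (-(3 : ℝ) / 2) * ε)
            (nhdsWithin 0 (Set.Ioi 0)) (nhds 0) := by
          have h0 : Filter.Tendsto (fun ε : ℝ => (3 : ℝ) ^ (-(3 : ℝ) / 2) * ε)
              (nhds 0) (nhds ((3 : ℝ) ^ (-(3 : ℝ) / 2) * 0)) :=
            (continuous_const.mul continuous_id).tendsto 0
          simpa using h0.mono_left nhdsWithin_le_nhds
        simpa using hε.mul h2
      refine h3.congr' ?_
      filter_upwards [self_mem_nhdsWithin] with ε (hε : ε ∈ Set.Ioi 0)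
      have hε0 : (ε : ℝ) ≠ 0 := ne_of_gt hε
      have : -1 / (3 * ε) = -(3⁻¹) * ε⁻¹ := by field_simp
      rw [← this]
      field_simp
      rw [← mul_pow, one_div_mul_cancel hε0, one_pow]
    · filter_upwards [self_mem_nhdsWithin] with ε (hε : ε ∈ Set.Ioi 0) h
      exact absurd h (pow_ne_zero _ (ne_of_gt hε))
end
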